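/- With the same matrices, [Q_r]_{33} = ((1 - f_0)·∏_{q=1}^{r} λ_q + f_r)², where λ_q = (1 - α - f_q)/(1 - f_{q-1}). -/

import Mathlib

/-!
`P*(α, β)` is the law of the number of ones among two independent copies of the two-state chain
with switching probabilities `β` (from `0`) and `α` (from `1`), so it maps the binomial row
`((1 - x)², 2(1 - x)x, x²)` to the binomial row of `β + (1 - α - β) x`. Hence the last row of
`Q_r` is binomial with parameter `x_r`, where `x_0 = 1`. With the given `β_q`, the affine map
`x ↦ β_q + (1 - α - β_q) x` has slope `λ_q` and sends `f_{q-1}` to `f_q`, so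
`x_r - f_r = (1 - f_0) ∏_{q ≤ r} λ_q`.
-/

open Finset Matrix

/-- The one-step transition matrix of the pair-count chain under partial
replacement. -/
def Pstar (α β : ℝ) : Matrix (Fin 3) (Fin 3) ℝ :=
  !![(1 - β) ^ 2, 2 * (1 - β) * β, β ^ 2;
     α * (1 - β), α * β + (1 - α) * (1 - β), (1 - α) * β;
     α ^ 2, 2 * α * (1 - α), (1 - α) ^ 2]

def binomialRow (x : ℝ) : Fin 3 → ℝ :=
  ![(1 - x) ^ 2, 2 * (1 - x) * x, x ^ 2]

theorem binomialRow_vecMul_Pstar (α β x : ℝ) :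
    binomialRow x ᵥ* Pstar α β = binomialRow (β + (1 - α - β) * x) := by
  ext j
  fin_cases j <;>
  · simp [binomialRow, Pstar, vecMul, dotProduct, Fin.sum_univ_succ]
    ring

theorem list_prod_Pstar_row_two (α : ℝ) (β x : ℕ → ℝ) (hx₀ : x 0 = 1)
    (hx : ∀ r, x (r + 1) = β (r + 1) + (1 - α - β (r + 1)) * x r) (r : ℕ) :
    ((List.range r).map fun i => Pstar α (β (i + 1))).prod 2 = binomialRow (x r) := by
  induction r with
  | zero => ext j; fin_cases j <;> simp [binomialRow, hx₀, one_apply]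
  | succ r ih =>
    rw [List.range_succ, List.map_append, List.prod_append, mul_apply_eq_vecMul]
    simp [ih, binomialRow_vecMul_Pstar, hx]

theorem affine_step_apply_add {α f f' b l : ℝ} (hf : f ≠ 1)
    (hb : b = (f' - (1 - α) * f) / (1 - f)) (hl : l = (1 - α - f') / (1 - f)) (y : ℝ) :
    b + (1 - α - b) * (f + y) = f' + l * y := by
  subst hb hl
  field_simp [sub_ne_zero.mpr hf.symm]
  ring

theorem pair_chain_entry_33_general (α : ℝ)
    (f : ℕ → ℝ) (hf : ∀ q, 0 ≤ f q ∧ f q < 1)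
    (β : ℕ → ℝ)
    (hβdef : ∀ q, 1 ≤ q → β q = (f q - (1 - α) * f (q - 1)) / (1 - f (q - 1)))
    (lam : ℕ → ℝ) (hlam : ∀ q, 1 ≤ q → lam q = (1 - α - f q) / (1 - f (q - 1)))
    (Q : ℕ → Matrix (Fin 3) (Fin 3) ℝ)
    (hQ : ∀ r, Q r = (((List.range r).map (fun i => Pstar α (β (i + 1)))).prod)) :
    ∀ r, 1 ≤ r →
      Q r 2 2 = ((1 - f 0) * (∏ q ∈ Finset.Icc 1 r, lam q) + f r) ^ 2 := by
  set x : ℕ → ℝ := fun r => (1 - f 0) * (∏ q ∈ Finset.Icc 1 r, lam q) + f r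
  have hx : ∀ r, x (r + 1) = β (r + 1) + (1 - α - β (r + 1)) * x r := by
    intro r
    have hβr := hβdef (r + 1) r.succ_pos
    have hlamr := hlam (r + 1) r.succ_pos
    rw [Nat.add_sub_cancel] at hβr hlamr
    simp only [x, prod_Icc_succ_top (Nat.le_add_left 1 r), add_comm _ (f r),
      affine_step_apply_add (hf r).2.ne hβr hlamr]
    ring
  intro r _
  rw [hQ, list_prod_Pstar_row_two α β x (by simp [x]) hx r]
  rfl

/-- With `Q_r = P*(β_1) ⋯ P*(β_r)`, `β_q = (f_q - (1-α)f_{q-1})/(1 - f_{q-1})`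
and `λ_q = (1 - α - f_q)/(1 - f_{q-1})`, the (3,3) entry of `Q_r` equals
`((1 - f_0) ∏_{q=1}^r λ_q + f_r)²`. -/
theorem pair_chain_entry_33 (α : ℝ) (hα : α ∈ Set.Icc (0 : ℝ) 1)
    (f : ℕ → ℝ) (hf : ∀ q, 0 ≤ f q ∧ f q < 1)
    (β : ℕ → ℝ)
    (hβdef : ∀ q, 1 ≤ q → β q = (f q - (1 - α) * f (q - 1)) / (1 - f (q - 1)))
    (hβ : ∀ q, 1 ≤ q → β q ∈ Set.Icc (0 : ℝ) 1)
    (lam : ℕ → ℝ) (hlam : ∀ q, 1 ≤ q → lam q = (1 - α - f q) / (1 - f (q - 1)))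
    (Q : ℕ → Matrix (Fin 3) (Fin 3) ℝ)
    (hQ : ∀ r, Q r = (((List.range r).map (fun i => Pstar α (β (i + 1)))).prod)) :
    ∀ r, 1 ≤ r →
      Q r 2 2 = ((1 - f 0) * (∏ q ∈ Finset.Icc 1 r, lam q) + f r) ^ 2 :=
  pair_chain_entry_33_general α f hf β hβdef lam hlam Q hQ
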